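/- arXiv:1411.1477 — 2 statements merged into one kernel-verified Lean document; each statement's English description precedes it below -/
import Mathlib

section
/- For all natural numbers k, m and positive integers n, the function G_k(n,m) := Σ_{q≥0} binom(2n, n+m+q) * binom(2n, n+q) * (m+2q)^(2k+1) * f_q (with f_q = 1 for q ≠ 0, f_0 = 1/2, and G_k(-1,m) := 0, G_k(0,m) = 0) satisfies the recurrence G_{k+2}(n,m) = 2(4n^2+m^2) G_{k+1}(n,m) - (4n^2-m^2)^2 G_k(n,m) + 64 n^2 (2n-1)^2 G_k(n-1,m). -/
/-!
Write `x = m + 2q`. The polynomial `x⁴ - 2(4n² + m²)x² + (4n² - m²)²` factors as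
`(x² - (2n + m)²)(x² - (2n - m)²) = 16 · j(2n - j) · j'(2n - j')` with `j = n + m + q` and
`j' = n + q`, the lower indices of the two binomial coefficients in the `q`-th summand.
The absorption identity `C(2n, j) · j(2n - j) = 2n(2n - 1) · C(2n - 2, j - 1)` turns this product
into the `q`-th summand of `G_k(n - 1, m)`, so the recurrence already holds summand by summand.
-/

/-- Binomial coefficient `n.choose k` extended to an integer lower index,
vanishing when `k < 0` (and, as usual, when `k > n`). -/
def ichoose (n : ℕ) (k : ℤ) : ℤ := if 0 ≤ k then (n.choose k.toNat : ℤ) else 0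

/-- The sum $G_k(n,m)$ with the weight $f_q$ ($f_0 = 1/2$, $f_q = 1$ otherwise). -/
noncomputable def G (k : ℕ) (n : ℕ) (m : ℤ) : ℚ :=
  ∑ᶠ q : ℕ, (ichoose (2 * n) (n + m + q) : ℚ) * (ichoose (2 * n) (n + q) : ℚ)
    * (m + 2 * q : ℚ) ^ (2 * k + 1) * (if q = 0 then (1 : ℚ) / 2 else 1)

open Finset

theorem Nat.choose_succ_succ_mul_succ_mul_sub (N a : ℕ) :
    (N + 2).choose (a + 1) * (a + 1) * (N + 1 - a) = (N + 2) * (N + 1) * N.choose a := by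
  rw [← Nat.add_one_mul_choose_eq, mul_assoc, ← Nat.choose_mul_succ_eq]
  ring

theorem ichoose_eq_zero_of_lt {N : ℕ} {j : ℤ} (h : (N : ℤ) < j) : ichoose N j = 0 := by
  rw [ichoose, if_pos (by omega), Nat.choose_eq_zero_of_lt (by omega), Nat.cast_zero]

theorem ichoose_eq_zero_of_neg (N : ℕ) {j : ℤ} (h : j < 0) : ichoose N j = 0 :=
  if_neg (by omega)

theorem ichoose_natCast (N a : ℕ) : ichoose N a = N.choose a := by
  simp [ichoose]

theorem ichoose_mul_mul_sub (N : ℕ) (j : ℤ) :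
    ichoose (N + 2) j * j * (N + 2 - j) = (N + 2) * (N + 1) * ichoose N (j - 1) := by
  by_cases hj : j ≤ 0
  · rcases hj.eq_or_lt with rfl | hneg
    · simp [ichoose_eq_zero_of_neg]
    · simp [ichoose_eq_zero_of_neg _ hneg, ichoose_eq_zero_of_neg _ (show j - 1 < 0 by omega)]
  obtain ⟨a, rfl⟩ : ∃ a : ℕ, j = a + 1 := ⟨(j - 1).toNat, by omega⟩
  rcases le_or_gt a (N + 1) with ha | ha
  · have key := congrArg (Nat.cast (R := ℤ)) (Nat.choose_succ_succ_mul_succ_mul_sub N a)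
    push_cast [Nat.cast_sub ha] at key
    rw [add_sub_cancel_right, ← Nat.cast_succ, ichoose_natCast, ichoose_natCast]
    push_cast
    linear_combination key
  · rw [ichoose_eq_zero_of_lt (by push_cast; omega), ichoose_eq_zero_of_lt (by omega)]
    ring

def gTerm (k n : ℕ) (m : ℤ) (q : ℕ) : ℚ :=
  (ichoose (2 * n) (n + m + q) : ℚ) * (ichoose (2 * n) (n + q) : ℚ)
    * (m + 2 * q : ℚ) ^ (2 * k + 1) * (if q = 0 then (1 : ℚ) / 2 else 1)

theorem G_eq_sum_range {n N : ℕ} (h : n ≤ N) (k : ℕ) (m : ℤ) :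
    G k n m = ∑ q ∈ range (N + 1), gTerm k n m q := by
  refine finsum_eq_sum_of_support_subset (gTerm k n m) fun q hq => ?_
  by_contra hqN
  simp only [coe_range, Set.mem_Iio, not_lt] at hqN
  exact hq (by simp [gTerm, ichoose_eq_zero_of_lt (show ((2 * n : ℕ) : ℤ) < n + q by omega)])

theorem gTerm_recurrence (k n : ℕ) (m : ℤ) (q : ℕ) :
    gTerm (k + 2) (n + 1) m q
      = 2 * (4 * ((n : ℚ) + 1) ^ 2 + (m : ℚ) ^ 2) * gTerm (k + 1) (n + 1) m q
        - (4 * ((n : ℚ) + 1) ^ 2 - (m : ℚ) ^ 2) ^ 2 * gTerm k (n + 1) m q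
        + 64 * ((n : ℚ) + 1) ^ 2 * (2 * ((n : ℚ) + 1) - 1) ^ 2 * gTerm k n m q := by
  have absorb (j : ℤ) : (ichoose (2 * n + 2) (j + 1) : ℚ) * (j + 1) * (2 * n + 1 - j)
      = (2 * n + 2) * (2 * n + 1) * ichoose (2 * n) j := by
    have h := congrArg (Int.cast (R := ℚ)) (ichoose_mul_mul_sub (2 * n) (j + 1))
    push_cast at h
    rw [add_sub_cancel_right] at h
    linear_combination h
  have hA := absorb (n + m + q)
  have hB := absorb (n + q)
  simp only [gTerm, show 2 * (n + 1) = 2 * n + 2 by ring]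
  push_cast
  rw [show (n : ℤ) + 1 + m + q = n + m + q + 1 by ring, show (n : ℤ) + 1 + q = n + q + 1 by ring]
  push_cast at hA hB
  linear_combination 16 * ((m : ℚ) + 2 * q) ^ (2 * k + 1) * (if q = 0 then (1 : ℚ) / 2 else 1) *
    ((ichoose (2 * n + 2) (n + q + 1) : ℚ) * (n + q + 1) * (2 * n + 1 - (n + q)) * hA
      + (2 * n + 2) * (2 * n + 1) * (ichoose (2 * n) (n + m + q) : ℚ) * hB)

theorem G_recurrence (k n : ℕ) (m : ℤ) :
    G (k + 2) (n + 1) m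
      = 2 * (4 * ((n : ℚ) + 1) ^ 2 + (m : ℚ) ^ 2) * G (k + 1) (n + 1) m
        - (4 * ((n : ℚ) + 1) ^ 2 - (m : ℚ) ^ 2) ^ 2 * G k (n + 1) m
        + 64 * ((n : ℚ) + 1) ^ 2 * (2 * ((n : ℚ) + 1) - 1) ^ 2 * G k n m := by
  rw [G_eq_sum_range le_rfl, G_eq_sum_range le_rfl, G_eq_sum_range le_rfl,
    G_eq_sum_range n.le_succ]
  simp only [mul_sum, ← sum_sub_distrib, ← sum_add_distrib]
  exact sum_congr rfl fun q _ => gTerm_recurrence k n m q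

theorem stmt6 (k m : ℕ) (n : ℕ) (hn : 1 ≤ n) :
    G (k + 2) n m
      = 2 * (4 * (n : ℚ) ^ 2 + (m : ℚ) ^ 2) * G (k + 1) n m
        - (4 * (n : ℚ) ^ 2 - (m : ℚ) ^ 2) ^ 2 * G k n m
        + 64 * (n : ℚ) ^ 2 * (2 * (n : ℚ) - 1) ^ 2 * G k (n - 1) m := by
  obtain ⟨n, rfl⟩ := Nat.exists_eq_add_of_le' hn
  simpa using G_recurrence k n m
end

section
/- For all positive integers n, the double sum over integers i, j of binom(2n, n+i) * binom(2n, n+j) * |i^4 - j^4| equals (2 n^3 (4n-3) / (2n-1)) * binom(2n, n)^2. -/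
open Function

lemma finsum_comp_sub_right {M : Type*} [AddCommMonoid M] (f : ℤ → M) (c : ℤ) :
    ∑ᶠ i, f (i - c) = ∑ᶠ i, f i :=
  finsum_comp_equiv (Equiv.subRight c)

lemma finsum_comp_add_right {M : Type*} [AddCommMonoid M] (f : ℤ → M) (c : ℤ) :
    ∑ᶠ i, f (i + c) = ∑ᶠ i, f i :=
  finsum_comp_equiv (Equiv.addRight c)

lemma finsum_eq_finsum_two_mul_add_finsum_two_mul_add_one {M : Type*} [AddCommMonoid M]
    {f : ℤ → M} (hf : HasFiniteSupport f) :
    ∑ᶠ t, f t = ∑ᶠ u, f (2 * u) + ∑ᶠ u, f (2 * u + 1) := by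
  have hunion : Set.range (fun u : ℤ => 2 * u) ∪ Set.range (fun u : ℤ => 2 * u + 1) = Set.univ :=
    Set.eq_univ_of_forall fun t => by
      rcases Int.even_or_odd' t with ⟨u, rfl | rfl⟩
      exacts [Or.inl ⟨u, rfl⟩, Or.inr ⟨u, rfl⟩]
  have hdisj : Disjoint (Set.range fun u : ℤ => 2 * u) (Set.range fun u : ℤ => 2 * u + 1) :=
    Set.disjoint_left.mpr fun t ⟨u, hu⟩ ⟨v, hv⟩ => by simp only at hu hv; omega
  rw [← finsum_mem_univ, ← hunion, finsum_mem_union' hdisj (hf.subset Set.inter_subset_right)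
    (hf.subset Set.inter_subset_right), finsum_mem_range, finsum_mem_range]
  · intro u v h; simp only at h; omega
  · intro u v h; simp only at h; omega

lemma finsum_sign_mul_sub {R : Type*} [CommRing R] {T : ℤ → R} (hT : HasFiniteSupport T)
    (c : ℤ) :
    ∑ᶠ i, (if i < c then -1 else 1) * (T (i - 1) - T i) = 2 * T (c - 1) := by
  -- `H` carries the sign; its jump at `c - 1` is what leaves `2 * T (c - 1)` behind.
  set H : ℤ → R := fun i => (if i + 1 < c then -1 else 1) * T i with hH_def
  have hsplit : ∀ i, (if i < c then -1 else 1) * (T (i - 1) - T i)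
      = (H (i - 1) - H i) + if i = c - 1 then 2 * T (c - 1) else 0 := by
    intro i
    simp only [hH_def, sub_add_cancel]
    rcases lt_trichotomy i (c - 1) with h | rfl | h
    · simp [show i < c by omega, show i + 1 < c by omega, h.ne]
      ring
    · simp
      ring
    · simp [show ¬ i < c by omega, show ¬ i + 1 < c by omega, h.ne']
  have hH : HasFiniteSupport H := hT.fun_mul_right _
  have hsingle : HasFiniteSupport fun i => if i = c - 1 then 2 * T (c - 1) else 0 :=
    (Set.finite_singleton (c - 1)).subset fun i hi => by_contra fun h => hi (if_neg h)
  rw [finsum_congr hsplit,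
    finsum_add_distrib (by fun_prop (disch := exact sub_left_injective)) hsingle,
    finsum_sub_distrib (by fun_prop (disch := exact sub_left_injective)) hH, finsum_comp_sub_right,
    sub_self, zero_add, finsum_eq_single _ (c - 1) fun i hi => if_neg hi, if_pos rfl]

lemma finsum_finsum_mul_eq_finsum_finsum_sub {R : Type*} [Semiring R] {a : ℤ → R}
    (ha : HasFiniteSupport a) (F : ℤ → ℤ → R) :
    ∑ᶠ i, ∑ᶠ j, a i * a j * F i j = ∑ᶠ s, ∑ᶠ i, a i * a (s - i) * F i (s - i) := by
  have hsupp : ∀ {g : ℤ → R}, (∀ i, a i = 0 → g i = 0) → support g ⊆ ha.toFinset :=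
    fun hg i hi => ha.mem_toFinset.mpr fun h => hi (hg i h)
  calc ∑ᶠ i, ∑ᶠ j, a i * a j * F i j
      = ∑ i ∈ ha.toFinset, ∑ᶠ s, a i * a (s - i) * F i (s - i) := by
        rw [finsum_eq_sum_of_support_subset _ (hsupp fun i hi => by simp [hi])]
        exact Finset.sum_congr rfl fun i _ =>
          (finsum_comp_sub_right (fun j => a i * a j * F i j) i).symm
    _ = ∑ᶠ s, ∑ i ∈ ha.toFinset, a i * a (s - i) * F i (s - i) :=
        sum_finsum_comm _ _ fun i _ => by fun_prop (disch := exact sub_left_injective)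
    _ = _ := finsum_congr fun s =>
        (finsum_eq_sum_of_support_subset _ (hsupp fun i hi => by simp [hi])).symm

section LinearOrderedField

variable {K : Type*} [Field K] [LinearOrder K] [IsStrictOrderedRing K]

lemma abs_two_mul_sub {c s : ℤ} (h₁ : 2 * c - 2 ≤ s) (h₂ : s ≤ 2 * c) (i : ℤ) :
    |(2 * i - s : K)| = (if i < c then -1 else 1) * (2 * i - s) := by
  split_ifs with h
  · rw [abs_of_nonpos (by exact_mod_cast (by omega : 2 * i - s ≤ 0))]
    ring
  · rw [abs_of_nonneg (by exact_mod_cast (by omega : 0 ≤ 2 * i - s)), one_mul]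

lemma abs_pow_four_sub_pow_four (x y : K) :
    |x ^ 4 - y ^ 4| = (|x + y| ^ 3 * |x - y| + |x + y| * |x - y| ^ 3) / 2 := by
  rw [show x ^ 4 - y ^ 4 = (x + y) * (x - y) * (((x + y) ^ 2 + (x - y) ^ 2) / 2) by ring,
    abs_mul, abs_mul, abs_of_nonneg (by positivity : (0 : K) ≤ ((x + y) ^ 2 + (x - y) ^ 2) / 2),
    ← sq_abs (x + y), ← sq_abs (x - y)]
  ring

lemma finsum_mul_abs_pow_four_sub {a : ℤ → K} (ha : HasFiniteSupport a)
    (heven : ∀ j, a (-j) = a j) (x : K) :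
    ∑ᶠ j : ℤ, a j * |x ^ 4 - (j : K) ^ 4| = ∑ᶠ j : ℤ, a j * (|x + j| ^ 3 * |x - j|) := by
  have hreflect : ∑ᶠ j : ℤ, a j * (|x + j| * |x - j| ^ 3)
      = ∑ᶠ j : ℤ, a j * (|x + j| ^ 3 * |x - j|) := by
    rw [← finsum_comp_equiv (Equiv.neg ℤ)]
    refine finsum_congr fun j => ?_
    simp only [Equiv.neg_apply, heven, Int.cast_neg, ← sub_eq_add_neg, sub_neg_eq_add]
    ring
  calc ∑ᶠ j : ℤ, a j * |x ^ 4 - (j : K) ^ 4|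
      = ∑ᶠ j : ℤ, (a j * (|x + j| ^ 3 * |x - j|) + a j * (|x + j| * |x - j| ^ 3)) * 2⁻¹ :=
        finsum_congr fun j => by rw [abs_pow_four_sub_pow_four]; ring
    _ = (∑ᶠ j : ℤ, a j * (|x + j| ^ 3 * |x - j|)
          + ∑ᶠ j : ℤ, a j * (|x + j| * |x - j| ^ 3)) * 2⁻¹ := by
        rw [← finsum_mul, finsum_add_distrib (ha.fun_mul_left _) (ha.fun_mul_left _)]
    _ = ∑ᶠ j : ℤ, a j * (|x + j| ^ 3 * |x - j|) := by rw [hreflect]; ring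

end LinearOrderedField

lemma Nat.centralBinom_succ_eq_two_mul_choose (k : ℕ) :
    (k + 1).centralBinom = 2 * (2 * k + 1).choose k := by
  rw [Nat.centralBinom_eq_two_mul_choose, show 2 * (k + 1) = 2 * k + 1 + 1 by ring,
    Nat.choose_succ_succ', ← Nat.choose_symm_half]
  ring

section ichoose

variable {m : ℕ} {k : ℤ}

@[simp] lemma ichoose_natCast_s13 (m j : ℕ) : ichoose m j = m.choose j := by
  simp [ichoose]

lemma ichoose_of_neg (hk : k < 0) : ichoose m k = 0 := by
  simp [ichoose, hk.not_ge]

lemma ichoose_of_lt (hk : (m : ℤ) < k) : ichoose m k = 0 := by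
  lift k to ℕ using by omega
  simp [Nat.choose_eq_zero_of_lt (by omega : m < k)]

lemma ichoose_eq_zero_of_notMem (hk : k ∉ Set.Icc (0 : ℤ) m) : ichoose m k = 0 := by
  rcases not_and_or.mp hk with hk | hk
  · exact ichoose_of_neg (by omega)
  · exact ichoose_of_lt (by omega)

lemma hasFiniteSupport_ichoose (m : ℕ) : HasFiniteSupport fun k : ℤ => (ichoose m k : ℚ) :=
  (Set.finite_Icc 0 (m : ℤ)).subset fun k hk => by
    by_contra h
    exact hk (by simp [ichoose_eq_zero_of_notMem h])

lemma ichoose_succ (m : ℕ) (k : ℤ) : ichoose (m + 1) k = ichoose m (k - 1) + ichoose m k := by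
  rcases lt_or_ge k 0 with hk | hk
  · simp [ichoose_of_neg hk, ichoose_of_neg (by omega : k - 1 < 0)]
  lift k to ℕ using hk
  rcases k with _ | j
  · simp [ichoose]
  · rw [show ((j + 1 : ℕ) : ℤ) - 1 = j by push_cast; ring]
    simp only [ichoose_natCast_s13]
    exact_mod_cast Nat.choose_succ_succ' m j

lemma mul_ichoose_succ (m : ℕ) (k : ℤ) :
    k * ichoose (m + 1) k = (m + 1) * ichoose m (k - 1) := by
  rcases lt_or_ge k 0 with hk | hk
  · simp [ichoose_of_neg hk, ichoose_of_neg (by omega : k - 1 < 0)]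
  lift k to ℕ using hk
  rcases k with _ | j
  · simp [ichoose_of_neg (by norm_num : (-1 : ℤ) < 0)]
  · rw [show ((j + 1 : ℕ) : ℤ) - 1 = j by push_cast; ring]
    have h : ((m + 1) * m.choose j : ℤ) = (m + 1).choose (j + 1) * (j + 1) := by
      exact_mod_cast Nat.add_one_mul_choose_eq m j
    simp only [ichoose_natCast_s13]
    push_cast
    linear_combination -h

lemma ichoose_symm (m : ℕ) (k : ℤ) : ichoose m (m - k) = ichoose m k := by
  rcases lt_or_ge k 0 with hk | hk
  · rw [ichoose_of_neg hk, ichoose_of_lt (by omega)]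
  rcases le_or_gt k m with hkm | hkm
  · lift k to ℕ using hk
    rw [← Nat.cast_sub (by omega), ichoose_natCast_s13, ichoose_natCast_s13, Nat.choose_symm (by omega)]
  · rw [ichoose_of_lt hkm, ichoose_of_neg (by omega)]

end ichoose

def binomProd (m : ℕ) (t i : ℤ) : ℚ := ichoose m i * ichoose m (t - i)

@[fun_prop]
lemma hasFiniteSupport_binomProd (m : ℕ) (t : ℤ) : HasFiniteSupport (binomProd m t) :=
  (hasFiniteSupport_ichoose m).fun_mul_left _

lemma binomProd_natCast (m a b : ℕ) :
    binomProd m (a + b : ℕ) a = (m.choose a * m.choose b : ℚ) := by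
  rw [binomProd, show ((a + b : ℕ) : ℤ) - a = b by push_cast; ring]
  simp

lemma binomProd_symm (m : ℕ) (t i : ℤ) : binomProd m (2 * i + m - t) i = binomProd m t i := by
  rw [binomProd, binomProd, ← ichoose_symm m (t - i), show 2 * i + m - t - i = m - (t - i) by ring]

lemma two_mul_sub_mul_binomProd_succ (m : ℕ) (t i : ℤ) :
    (2 * i - t : ℚ) * binomProd (m + 1) t i
      = (m + 1) * (binomProd m (t - 1) (i - 1) - binomProd m (t - 1) i) := by
  have hmul := congrArg (Int.cast : ℤ → ℚ) (mul_ichoose_succ m i)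
  have hmul' := congrArg (Int.cast : ℤ → ℚ) (mul_ichoose_succ m (t - i))
  have hpascal := congrArg (Int.cast : ℤ → ℚ) (ichoose_succ m i)
  have hpascal' := congrArg (Int.cast : ℤ → ℚ) (ichoose_succ m (t - i))
  push_cast at hmul hmul' hpascal hpascal'
  rw [binomProd, binomProd, binomProd, show t - 1 - (i - 1) = t - i by ring,
    show t - 1 - i = t - i - 1 by ring]
  linear_combination (ichoose (m + 1) (t - i) : ℚ) * hmul - (ichoose (m + 1) i : ℚ) * hmul'
    + (m + 1) * (ichoose m (i - 1) : ℚ) * hpascal'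
    - (m + 1) * (ichoose m (t - i - 1) : ℚ) * hpascal

noncomputable def binomAbsMoment (m : ℕ) (t : ℤ) (p : ℕ) : ℚ :=
  ∑ᶠ i : ℤ, |(2 * i - t : ℚ)| ^ p * binomProd m t i

lemma hasFiniteSupport_binomAbsMoment (m p : ℕ) :
    HasFiniteSupport fun t => binomAbsMoment m t p :=
  (Set.finite_Icc 0 (2 * m : ℤ)).subset fun t ht => by_contra fun h => ht <|
    finsum_eq_zero_of_forall_eq_zero fun i => by
      have : i ∉ Set.Icc (0 : ℤ) m ∨ t - i ∉ Set.Icc (0 : ℤ) m := by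
        simp only [Set.mem_Icc] at h ⊢
        omega
      rcases this with h | h <;> simp [binomProd, ichoose_eq_zero_of_notMem h]

lemma binomAbsMoment_zero (t : ℤ) {p : ℕ} (hp : p ≠ 0) : binomAbsMoment 0 t p = 0 := by
  refine finsum_eq_zero_of_forall_eq_zero fun i => ?_
  by_cases h : i = 0 ∧ t = 0
  · simp [h, hp]
  · have : i ∉ Set.Icc (0 : ℤ) 0 ∨ t - i ∉ Set.Icc (0 : ℤ) 0 := by
      simp only [Set.mem_Icc]
      omega
    rcases this with h | h <;> simp [binomProd, ichoose_eq_zero_of_notMem h]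

theorem binomAbsMoment_succ_one {m : ℕ} {t c : ℤ} (h₁ : 2 * c ≤ t) (h₂ : t < 2 * c + 2) :
    binomAbsMoment (m + 1) t 1 = 2 * (m + 1) * binomProd m (t - 1) c := by
  have hterm : ∀ i : ℤ, |(2 * i - t : ℚ)| ^ 1 * binomProd (m + 1) t i
      = (m + 1) * ((if i < c + 1 then -1 else 1)
        * (binomProd m (t - 1) (i - 1) - binomProd m (t - 1) i)) := by
    intro i
    rw [pow_one, abs_two_mul_sub (c := c + 1) (by omega) (by omega), mul_assoc,
      two_mul_sub_mul_binomProd_succ]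
    ring
  rw [binomAbsMoment, finsum_congr hterm, ← mul_finsum,
    finsum_sign_mul_sub (hasFiniteSupport_binomProd m _), add_sub_cancel_right]
  ring

/-- Summation by parts against `(2i - t)²`: since `(2i - t)² - (2i - 2 - t)² = 4 (2i - 1 - t)`,
what is left besides the boundary term is the first moment one level down. -/
theorem binomAbsMoment_succ_three {m : ℕ} {t c : ℤ} (h₁ : 2 * c ≤ t) (h₂ : t < 2 * c + 2) :
    binomAbsMoment (m + 1) t 3 = (m + 1) * (2 * (2 * c - t) ^ 2 * binomProd m (t - 1) c
      + 4 * binomAbsMoment m (t - 1) 1) := by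
  set G : ℤ → ℚ := fun j => (2 * j - t) ^ 2 * binomProd m (t - 1) j with hG_def
  have hterm : ∀ i : ℤ, |(2 * i - t : ℚ)| ^ 3 * binomProd (m + 1) t i
      = (m + 1) * ((if i < c + 1 then -1 else 1) * (G (i - 1) - G i)
        + 4 * (|(2 * i - (t + 1 : ℤ) : ℚ)| * binomProd m (t - 1) (i - 1))) := by
    intro i
    rw [show |(2 * i - t : ℚ)| ^ 3 = |(2 * i - t : ℚ)| * (2 * i - t) ^ 2 by
        rw [pow_succ', sq_abs],
      abs_two_mul_sub (c := c + 1) (by omega) (by omega),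
      abs_two_mul_sub (c := c + 1) (by omega) (by omega)]
    have key := two_mul_sub_mul_binomProd_succ m t i
    simp only [hG_def]
    push_cast
    linear_combination ((if i < c + 1 then -1 else 1) * (2 * i - t : ℚ) ^ 2) * key
  have hG : HasFiniteSupport G := (hasFiniteSupport_binomProd m _).fun_mul_right _
  rw [binomAbsMoment, finsum_congr hterm, ← mul_finsum,
    finsum_add_distrib (by fun_prop (disch := exact sub_left_injective))
      (by fun_prop (disch := exact sub_left_injective)),
    finsum_sign_mul_sub hG, ← mul_finsum, add_sub_cancel_right, ← finsum_comp_add_right _ 1]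
  simp only [hG_def, add_sub_cancel_right, binomAbsMoment, pow_one]
  push_cast
  ring_nf

lemma binomAbsMoment_even_self_one (k : ℕ) :
    binomAbsMoment (2 * k) (2 * k) 1 = k * (k.centralBinom : ℚ) ^ 2 := by
  rcases k with _ | j
  · simp [binomAbsMoment_zero]
  rw [show 2 * (j + 1) = 2 * j + 1 + 1 by ring,
    binomAbsMoment_succ_one (t := 2 * ((j + 1 : ℕ) : ℤ)) (c := ((j + 1 : ℕ) : ℤ)) le_rfl
      (by omega),
    show 2 * ((j + 1 : ℕ) : ℤ) - 1 = ((j + 1 + j : ℕ) : ℤ) by push_cast; ring,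
    binomProd_natCast, Nat.choose_symm_half, Nat.centralBinom_succ_eq_two_mul_choose]
  push_cast
  ring

lemma binomAbsMoment_even_succ_one (k : ℕ) :
    binomAbsMoment (2 * k) (2 * k + 1) 1 = k * (k.centralBinom : ℚ) ^ 2 := by
  rcases k with _ | j
  · simp [binomAbsMoment_zero]
  rw [show 2 * (j + 1) = 2 * j + 1 + 1 by ring,
    binomAbsMoment_succ_one (t := 2 * ((j + 1 : ℕ) : ℤ) + 1) (c := ((j + 1 : ℕ) : ℤ))
      (by omega) (by omega),
    show 2 * ((j + 1 : ℕ) : ℤ) + 1 - 1 = ((j + 1 + (j + 1) : ℕ) : ℤ) by push_cast; ring,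
    binomProd_natCast, Nat.choose_symm_half, Nat.centralBinom_succ_eq_two_mul_choose]
  push_cast
  ring

lemma binomAbsMoment_odd_succ_three (k : ℕ) :
    binomAbsMoment (2 * k + 1) (2 * k + 1 + 1 : ℕ) 3
      = 4 * (2 * k + 1) * k * (k.centralBinom : ℚ) ^ 2 := by
  rw [binomAbsMoment_succ_three (c := k + 1) (by push_cast; omega) (by push_cast; omega),
    show ((2 * k + 1 + 1 : ℕ) : ℤ) - 1 = 2 * k + 1 by push_cast; ring,
    binomAbsMoment_even_succ_one]
  push_cast
  ring

lemma binomAbsMoment_odd_self_three (k : ℕ) :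
    binomAbsMoment (2 * k + 1) (2 * k + 1 : ℕ) 3
      = (2 * k + 1) * (4 * k + 2) * (k.centralBinom : ℚ) ^ 2 := by
  rw [binomAbsMoment_succ_three (c := k) (by push_cast; omega) (by push_cast; omega),
    show ((2 * k + 1 : ℕ) : ℤ) - 1 = ((k + k : ℕ) : ℤ) by push_cast; ring,
    binomProd_natCast, show ((k + k : ℕ) : ℤ) = 2 * k by push_cast; ring,
    binomAbsMoment_even_self_one, Nat.centralBinom_eq_two_mul_choose]
  push_cast
  ring

theorem finsum_finsum_ichoose_mul_abs_pow_four_sub (n : ℕ) :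
    ∑ᶠ i : ℤ, ∑ᶠ j : ℤ, ((ichoose (2 * n) (n + i) : ℚ) * (ichoose (2 * n) (n + j) : ℚ)
        * |(i : ℚ) ^ 4 - (j : ℚ) ^ 4|)
      = ∑ᶠ t : ℤ, |(t : ℚ) - (2 * n : ℕ)| ^ 3 * binomAbsMoment (2 * n) t 1 := by
  set a : ℤ → ℚ := fun i => (ichoose (2 * n) (n + i) : ℚ) with ha_def
  have ha : HasFiniteSupport a :=
    (hasFiniteSupport_ichoose (2 * n)).comp_of_injective (g := fun i : ℤ => (n : ℤ) + i)
      (add_right_injective _)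
  have heven : ∀ j, a (-j) = a j := fun j => by
    simp only [ha_def, ← ichoose_symm (2 * n) (n + j)]
    push_cast
    ring_nf
  calc ∑ᶠ i : ℤ, ∑ᶠ j : ℤ, a i * a j * |(i : ℚ) ^ 4 - (j : ℚ) ^ 4|
      = ∑ᶠ i : ℤ, ∑ᶠ j : ℤ, a i * a j * (|(i : ℚ) + j| ^ 3 * |(i : ℚ) - j|) := by
        refine finsum_congr fun i => ?_
        simp_rw [mul_assoc, ← mul_finsum, finsum_mul_abs_pow_four_sub ha heven]
    _ = ∑ᶠ s : ℤ, ∑ᶠ i : ℤ,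
          a i * a (s - i) * (|(i : ℚ) + ↑(s - i)| ^ 3 * |(i : ℚ) - ↑(s - i)|) :=
        finsum_finsum_mul_eq_finsum_finsum_sub ha fun i j => |(i : ℚ) + j| ^ 3 * |(i : ℚ) - j|
    _ = ∑ᶠ s : ℤ, |(s : ℚ)| ^ 3 * binomAbsMoment (2 * n) (s + (2 * n : ℕ)) 1 := by
        refine finsum_congr fun s => ?_
        rw [binomAbsMoment, mul_finsum, ← finsum_comp_sub_right _ (n : ℤ)]
        refine finsum_congr fun x => ?_
        simp only [ha_def, binomProd, pow_one, add_sub_cancel]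
        rw [show (n : ℤ) + (s - (x - n)) = s + ((2 * n : ℕ) : ℤ) - x by push_cast; ring]
        push_cast
        ring_nf
    _ = ∑ᶠ t : ℤ, |(t : ℚ) - (2 * n : ℕ)| ^ 3 * binomAbsMoment (2 * n) t 1 := by
        rw [← finsum_comp_add_right (fun t : ℤ => |(t : ℚ) - (2 * n : ℕ)| ^ 3
          * binomAbsMoment (2 * n) t 1) ((2 * n : ℕ) : ℤ)]
        simp

theorem finsum_abs_pow_three_mul_binomAbsMoment (m : ℕ) :
    ∑ᶠ t : ℤ, |(t : ℚ) - (m + 1 : ℕ)| ^ 3 * binomAbsMoment (m + 1) t 1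
      = 2 * (m + 1) * (binomAbsMoment m (m + 1 : ℕ) 3 + binomAbsMoment m m 3) := by
  rw [finsum_eq_finsum_two_mul_add_finsum_two_mul_add_one
      ((hasFiniteSupport_binomAbsMoment _ _).fun_mul_right _),
    mul_add, binomAbsMoment, binomAbsMoment, mul_finsum, mul_finsum]
  congr 1 <;> refine finsum_congr fun u => ?_
  · rw [binomAbsMoment_succ_one (c := u) le_rfl (by omega), ← binomProd_symm m (2 * u - 1),
      show 2 * u + m - (2 * u - 1) = ((m + 1 : ℕ) : ℤ) by push_cast; ring]
    push_cast
    ring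
  · rw [binomAbsMoment_succ_one (c := u) (by omega) (by omega),
      ← binomProd_symm m (2 * u + 1 - 1), show 2 * u + m - (2 * u + 1 - 1) = (m : ℤ) by ring]
    push_cast
    ring_nf

theorem stmt13 (n : ℕ) (hn : 1 ≤ n) :
    ∑ᶠ i : ℤ, ∑ᶠ j : ℤ,
        ((ichoose (2 * n) (n + i) : ℚ) * (ichoose (2 * n) (n + j) : ℚ)
          * |(i : ℚ) ^ 4 - (j : ℚ) ^ 4|)
      = 2 * (n : ℚ) ^ 3 * (4 * n - 3) / (2 * n - 1) * ((2 * n).choose n : ℚ) ^ 2 := by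
  obtain ⟨k, rfl⟩ := Nat.exists_eq_add_of_le' hn
  have hcentral : ((k + 1 : ℕ) : ℚ) * (k + 1).centralBinom
      = 2 * (2 * k + 1) * k.centralBinom := by
    exact_mod_cast Nat.succ_mul_centralBinom_succ k
  rw [finsum_finsum_ichoose_mul_abs_pow_four_sub, ← Nat.centralBinom_eq_two_mul_choose,
    show 2 * (k + 1) = 2 * k + 1 + 1 by ring, finsum_abs_pow_three_mul_binomAbsMoment,
    binomAbsMoment_odd_succ_three, binomAbsMoment_odd_self_three]
  push_cast at hcentral ⊢
  rw [show 2 * ((k : ℚ) + 1) - 1 = 2 * k + 1 by ring, div_mul_eq_mul_div,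
    eq_div_iff (by positivity)]
  linear_combination (-2 * ((k : ℚ) + 1) * (4 * k + 1)
    * ((k + 1) * (k + 1).centralBinom + 2 * (2 * k + 1) * k.centralBinom)) * hcentral
end
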